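/- Let P be a convex class of densities, fix p ∈ P, ε > 0, α ≥ 2, and let Q = P ∩ {q : H²(p,q) ≤ ε}. Suppose S ⊂ Q is finite and for every q ∈ Q there is q̃ ∈ S with q(x) ≤ α·q̃(x) for all x. Then for every q ∈ P, min_{q̃∈S} KL(q, q̃) ≤ 30·(ε + H²(p,q))·log(α·max{1, H²(p,q)/ε}). -/

import Mathlib

open MeasureTheory

/-- Squared Hellinger distance between densities. -/
noncomputable def sqHellinger {X : Type*} [MeasurableSpace X] (μ : Measure X)
    (f g : X → ℝ) : ℝ :=
  (1 / 2) * ∫ x, (Real.sqrt (f x) - Real.sqrt (g x)) ^ 2 ∂μ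

/-- Kullback–Leibler divergence between densities. -/
noncomputable def klDiv' {X : Type*} [MeasurableSpace X] (μ : Measure X)
    (f g : X → ℝ) : ℝ :=
  ∫ x, f x * Real.log (f x / g x) ∂μ

open Real

lemma log_chord {s₀ s : ℝ} (h0 : 0 < s₀) (h1 : s₀ ≤ s) (h2 : s ≤ 1) :
    (1 - s)/(1 - s₀) * Real.log s₀ ≤ Real.log s := by
  rcases eq_or_lt_of_le (h1.trans h2) with h | hlt
  · have hs1 : s = 1 := le_antisymm h2 (h.symm ▸ h1)
    simp [hs1, h]
  · have hcc := strictConcaveOn_log_Ioi.concaveOn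
    have hne : (1 - s₀) ≠ 0 := by linarith
    have ha : (0:ℝ) ≤ (1 - s)/(1 - s₀) := by
      apply div_nonneg <;> linarith
    have hb : (0:ℝ) ≤ (s - s₀)/(1 - s₀) := by
      apply div_nonneg <;> linarith
    have hab : (1 - s)/(1 - s₀) + (s - s₀)/(1 - s₀) = 1 := by
      field_simp
      ring
    have key := hcc.2 (Set.mem_Ioi.2 h0) (Set.mem_Ioi.2 one_pos) ha hb hab
    have hx : ((1 - s)/(1 - s₀)) • s₀ + ((s - s₀)/(1 - s₀)) • (1:ℝ) = s := by
      rw [smul_eq_mul, smul_eq_mul]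
      field_simp
      ring
    rw [hx] at key
    simpa using key

lemma log_lb {x : ℝ} (hx : 0 < x) : 1 - 1/x ≤ Real.log x := by
  have h := Real.log_le_sub_one_of_pos (show (0:ℝ) < 1/x by positivity)
  rw [Real.log_div one_ne_zero (ne_of_gt hx), Real.log_one] at h
  linarith

lemma key_scalar {B s : ℝ} (hB : 2 ≤ B) (hs : 0 < s) (hs0 : 1/Real.sqrt B ≤ s) :
    -(2 * Real.log s) ≤ (15/2 * Real.log B) * (1 - s)^2 + (1 - s^2) := by
  set L := Real.log B with hL
  have hL2 : (0.6931471803 : ℝ) < L := lt_of_lt_of_le Real.log_two_gt_d9 (Real.log_le_log (by norm_num) hB)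
  have hsB : (1.414 : ℝ) ≤ Real.sqrt B := by
    rw [show (1.414:ℝ) = Real.sqrt (1.414^2) by rw [Real.sqrt_sq]; norm_num]
    exact Real.sqrt_le_sqrt (by nlinarith)
  have hsBpos : 0 < Real.sqrt B := by linarith
  have hs0' : (0:ℝ) < 1/Real.sqrt B := by positivity
  have hs0u : 1/Real.sqrt B ≤ 0.708 := by
    rw [div_le_iff₀ hsBpos]; nlinarith
  rcases le_or_gt (1/2 : ℝ) s with hhalf | hhalf
  · -- s ≥ 1/2 : use log s ≥ 1 - 1/s
    have h1 := log_lb hs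
    have h2 : -(2 * Real.log s) ≤ 2*(1/s) - 2 := by linarith
    have hss : s * (1/s) = 1 := by field_simp
    have h3 : 2*(1/s) - 2 ≤ (15/2 * L) * (1 - s)^2 + (1 - s^2) := by
      nlinarith [hss, mul_nonneg (mul_nonneg (by linarith : (0:ℝ) ≤ 15/2*L - 5) hs.le) (sq_nonneg (1 - s)), mul_nonneg (sq_nonneg (s-1)) (by linarith : (0:ℝ) ≤ 2*s - 1)]
    linarith
  · -- s ≤ 1/2 : chord bound
    have hs1 : s ≤ 1 := by linarith
    have hlogs0 : Real.log (1/Real.sqrt B) = -(L/2) := by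
      rw [one_div, Real.log_inv, Real.log_sqrt (by linarith : (0:ℝ) ≤ B)]
    have hch := log_chord hs0' hs0 hs1
    rw [hlogs0] at hch
    have hden : (0:ℝ) < 1 - 1/Real.sqrt B := by linarith
    -- hch : (1-s)/(1-s₀) * (-(L/2)) ≤ log s
    set s₀ := 1/Real.sqrt B with hs₀def
    have hL0 : (0:ℝ) ≤ L := by linarith
    have hch' : -((1-s) * L) ≤ 2 * ((1 - s₀) * Real.log s) := by
      have h := mul_le_mul_of_nonneg_left hch (le_of_lt (by linarith : (0:ℝ) < 2*(1 - s₀)))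
      have heq : 2*(1-s₀) * ((1 - s) / (1 - s₀) * -(L / 2)) = -((1-s)*L) := by
        field_simp
      rw [heq] at h
      linarith
    have hfin : (1 - s) * L ≤ (1 - s₀) * ((15/2*L)*(1-s)^2 + (1 - s^2)) := by
      nlinarith [mul_nonneg (mul_nonneg hL0 (by linarith : (0:ℝ) ≤ 1 - s)) (by linarith : (0:ℝ) ≤ 1/2 - s),
        mul_nonneg (by linarith : (0:ℝ) ≤ 1 - s₀ - 0.292) (mul_nonneg hL0 (sq_nonneg (1-s))),
        mul_nonneg (by linarith : (0:ℝ) ≤ 1 - s₀) (by nlinarith : (0:ℝ) ≤ 1 - s^2)]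
    have h5 : (1 - s₀) * (-(2*Real.log s)) ≤ (1 - s₀) * ((15/2*L)*(1-s)^2 + (1-s^2)) := by
      nlinarith [hch', hfin]
    exact (mul_le_mul_iff_right₀ hden).mp h5

lemma ptwise_lb {a b : ℝ} (ha : 0 ≤ a) (hb : 0 ≤ b) : -b ≤ a * Real.log (a/b) := by
  rcases eq_or_lt_of_le ha with h | ha'
  · simp [← h]; linarith
  rcases eq_or_lt_of_le hb with h | hb'
  · rw [← h, div_zero, Real.log_zero, mul_zero]; linarith
  have h1 : Real.log (b/a) ≤ b/a - 1 := Real.log_le_sub_one_of_pos (by positivity)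
  have h2 : Real.log (a/b) = -Real.log (b/a) := by
    rw [← Real.log_inv]; congr 1; field_simp
  rw [h2]
  have h3 : a * (b/a) = b := by field_simp
  nlinarith
lemma ptwise_ub {B a b : ℝ} (hB : 2 ≤ B) (ha : 0 ≤ a) (hb : 0 ≤ b) (hab : a ≤ B * b) :
    a * Real.log (a/b) ≤ (15/2 * Real.log B) * (Real.sqrt a - Real.sqrt b)^2 + (a - b) := by
  have hL : (0.69 : ℝ) < Real.log B := lt_of_lt_of_le (by linarith [Real.log_two_gt_d9]) (Real.log_le_log (by norm_num) hB)
  rcases eq_or_lt_of_le ha with h | ha'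
  · rw [← h]
    simp [Real.sqrt_zero]
    nlinarith [Real.sq_sqrt hb, Real.sqrt_nonneg b]
  have hb' : 0 < b := by nlinarith
  set s := Real.sqrt (b/a) with hs_def
  have hs : 0 < s := Real.sqrt_pos.2 (by positivity)
  have hs2 : s^2 = b/a := Real.sq_sqrt (by positivity)
  have hs0 : 1/Real.sqrt B ≤ s := by
    rw [one_div, ← Real.sqrt_inv]
    apply Real.sqrt_le_sqrt
    rw [inv_eq_one_div, div_le_div_iff₀ (by linarith) ha']
    linarith
  have key := key_scalar hB hs hs0
  have hkey := mul_le_mul_of_nonneg_left key ha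
  have hlog : Real.log (a/b) = -(2*Real.log s) := by
    rw [show a/b = (b/a)⁻¹ by field_simp, Real.log_inv, ← hs2, Real.log_pow]
    push_cast; ring
  have hsq : Real.sqrt a * s = Real.sqrt b := by
    rw [hs_def, ← Real.sqrt_mul ha]
    congr 1
    field_simp
  have hsa : Real.sqrt a ^ 2 = a := Real.sq_sqrt ha
  have he1 : a * (1 - s)^2 = (Real.sqrt a - Real.sqrt b)^2 := by
    rw [← hsq]; linear_combination (-(1-s)^2) * hsa
  have he2 : a * (1 - s^2) = a - b := by
    rw [hs2]; field_simp
  rw [hlog]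
  calc a * -(2*Real.log s) = a * (-(2 * Real.log s)) := by ring
    _ ≤ a * ((15/2 * Real.log B) * (1 - s)^2 + (1 - s^2)) := hkey
    _ = (15/2 * Real.log B) * (a * (1-s)^2) + a * (1 - s^2) := by ring
    _ = (15/2 * Real.log B) * (Real.sqrt a - Real.sqrt b)^2 + (a - b) := by rw [he1, he2]


open MeasureTheory

lemma sq_diff_integrable {X : Type*} [MeasurableSpace X] (μ : Measure X)
    (f g : X → ℝ) (hf : Measurable f) (hg : Measurable g)
    (hf0 : ∀ x, 0 ≤ f x) (hg0 : ∀ x, 0 ≤ g x)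
    (hfi : Integrable f μ) (hgi : Integrable g μ) :
    Integrable (fun x => (Real.sqrt (f x) - Real.sqrt (g x)) ^ 2) μ := by
  apply Integrable.mono' (hfi.add hgi)
  · exact (((Real.continuous_sqrt.measurable).comp hf).sub
      ((Real.continuous_sqrt.measurable).comp hg)).pow_const 2 |>.aestronglyMeasurable
  · filter_upwards with x
    rw [Real.norm_eq_abs, abs_of_nonneg (sq_nonneg _)]
    have h1 := Real.sq_sqrt (hf0 x)
    have h2 := Real.sq_sqrt (hg0 x)
    have h3 := Real.sqrt_nonneg (f x)
    have h4 := Real.sqrt_nonneg (g x)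
    simp only [Pi.add_apply]
    nlinarith [mul_nonneg h3 h4]

lemma sqHellinger_nonneg {X : Type*} [MeasurableSpace X] (μ : Measure X)
    (f g : X → ℝ) : 0 ≤ sqHellinger μ f g := by
  unfold sqHellinger
  have : 0 ≤ ∫ x, (Real.sqrt (f x) - Real.sqrt (g x)) ^ 2 ∂μ :=
    integral_nonneg fun x => sq_nonneg _
  linarith

lemma kl_bound {X : Type*} [MeasurableSpace X] (μ : Measure X)
    (q qt : X → ℝ) (hq : Measurable q) (hqt : Measurable qt)
    (hq0 : ∀ x, 0 ≤ q x) (hqt0 : ∀ x, 0 ≤ qt x)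
    (hqi : Integrable q μ) (hqti : Integrable qt μ)
    (hq1 : ∫ x, q x ∂μ = 1) (hqt1 : ∫ x, qt x ∂μ = 1)
    (B : ℝ) (hB : 2 ≤ B) (hr : ∀ x, q x ≤ B * qt x) :
    klDiv' μ q qt ≤ (15 * Real.log B) * sqHellinger μ q qt := by
  set d := (15/2 : ℝ) * Real.log B with hd
  have hL : (0.69 : ℝ) < Real.log B :=
    lt_of_lt_of_le (by linarith [Real.log_two_gt_d9]) (Real.log_le_log (by norm_num) hB)
  have hd5 : (5:ℝ) ≤ d := by rw [hd]; linarith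
  have hsqi := sq_diff_integrable μ q qt hq hqt hq0 hqt0 hqi hqti
  have hsubi : Integrable (fun x => q x - qt x) μ := hqi.sub hqti
  have haddi : Integrable (fun x => q x + qt x) μ := hqi.add hqti
  have hGi : Integrable (fun x => d * (Real.sqrt (q x) - Real.sqrt (qt x)) ^ 2 + (q x - qt x)) μ :=
    (hsqi.const_mul d).add hsubi
  have hfmeas : Measurable (fun x => q x * Real.log (q x / qt x)) :=
    hq.mul (Real.measurable_log.comp (hq.div hqt))
  have hfle : ∀ x, q x * Real.log (q x / qt x) ≤
      d * (Real.sqrt (q x) - Real.sqrt (qt x)) ^ 2 + (q x - qt x) :=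
    fun x => ptwise_ub hB (hq0 x) (hqt0 x) (hr x)
  have hflb : ∀ x, -(qt x) ≤ q x * Real.log (q x / qt x) :=
    fun x => ptwise_lb (hq0 x) (hqt0 x)
  have hfi : Integrable (fun x => q x * Real.log (q x / qt x)) μ := by
    apply Integrable.mono' ((hsqi.const_mul d).add haddi)
    · exact hfmeas.aestronglyMeasurable
    · filter_upwards with x
      rw [Real.norm_eq_abs, abs_le]
      have h2 : 0 ≤ d * (Real.sqrt (q x) - Real.sqrt (qt x)) ^ 2 :=
        mul_nonneg (by linarith) (sq_nonneg _)
      simp only [Pi.add_apply]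
      constructor
      · have h1 := hflb x
        have := hq0 x
        linarith
      · have h1 := hfle x
        have := hqt0 x
        linarith
  have hmono : ∫ x, q x * Real.log (q x / qt x) ∂μ ≤
      ∫ x, (d * (Real.sqrt (q x) - Real.sqrt (qt x)) ^ 2 + (q x - qt x)) ∂μ :=
    integral_mono hfi hGi hfle
  have hGint : ∫ x, (d * (Real.sqrt (q x) - Real.sqrt (qt x)) ^ 2 + (q x - qt x)) ∂μ
      = d * ∫ x, (Real.sqrt (q x) - Real.sqrt (qt x)) ^ 2 ∂μ := by
    rw [integral_add (hsqi.const_mul d) hsubi, integral_const_mul d _,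
      integral_sub hqi hqti, hq1, hqt1]
    ring
  unfold klDiv' sqHellinger
  rw [hGint] at hmono
  calc ∫ x, q x * Real.log (q x / qt x) ∂μ
      ≤ d * ∫ x, (Real.sqrt (q x) - Real.sqrt (qt x)) ^ 2 ∂μ := hmono
    _ = 15 * Real.log B * ((1/2) * ∫ x, (Real.sqrt (q x) - Real.sqrt (qt x)) ^ 2 ∂μ) := by
        rw [hd]; ring

lemma sqHellinger_symm {X : Type*} [MeasurableSpace X] (μ : Measure X)
    (f g : X → ℝ) : sqHellinger μ f g = sqHellinger μ g f := by
  unfold sqHellinger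
  congr 1
  exact integral_congr_ae (Filter.Eventually.of_forall fun x => by ring)

lemma sqHellinger_triangle {X : Type*} [MeasurableSpace X] (μ : Measure X)
    (f g h : X → ℝ) (hf : Measurable f) (hg : Measurable g) (hh : Measurable h)
    (hf0 : ∀ x, 0 ≤ f x) (hg0 : ∀ x, 0 ≤ g x) (hh0 : ∀ x, 0 ≤ h x)
    (hfi : Integrable f μ) (hgi : Integrable g μ) (hhi : Integrable h μ) :
    sqHellinger μ f h ≤ 2 * sqHellinger μ f g + 2 * sqHellinger μ g h := by
  have i1 := sq_diff_integrable μ f g hf hg hf0 hg0 hfi hgi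
  have i2 := sq_diff_integrable μ g h hg hh hg0 hh0 hgi hhi
  have hRi : Integrable (fun x => 2 * (Real.sqrt (f x) - Real.sqrt (g x))^2
      + 2 * (Real.sqrt (g x) - Real.sqrt (h x))^2) μ := (i1.const_mul 2).add (i2.const_mul 2)
  have hmono : ∫ x, (Real.sqrt (f x) - Real.sqrt (h x))^2 ∂μ ≤
      ∫ x, (2 * (Real.sqrt (f x) - Real.sqrt (g x))^2
        + 2 * (Real.sqrt (g x) - Real.sqrt (h x))^2) ∂μ := by
    apply integral_mono_of_nonneg
    · filter_upwards with x; positivity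
    · exact hRi
    · filter_upwards with x
      nlinarith [sq_nonneg (Real.sqrt (f x) - 2*Real.sqrt (g x) + Real.sqrt (h x))]
  have hsplit : ∫ x, (2 * (Real.sqrt (f x) - Real.sqrt (g x))^2
      + 2 * (Real.sqrt (g x) - Real.sqrt (h x))^2) ∂μ
      = 2 * (∫ x, (Real.sqrt (f x) - Real.sqrt (g x))^2 ∂μ)
        + 2 * (∫ x, (Real.sqrt (g x) - Real.sqrt (h x))^2 ∂μ) := by
    rw [integral_add (i1.const_mul 2) (i2.const_mul 2), integral_const_mul 2 _,
      integral_const_mul 2 _]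
  unfold sqHellinger
  rw [hsplit] at hmono
  linarith

lemma conv_pt_core {x y u r : ℝ} (hx0 : 0 ≤ x) (hy0 : 0 ≤ y) (hu0 : 0 ≤ u)
    (hr0 : 0 ≤ r) (hr1 : r ≤ 1)
    (hu2 : u^2 = (1 - r^2)*x^2 + r^2*y^2) : (x - u)^2 ≤ r^2*(x - y)^2 := by
  have hc0 : 0 ≤ (1 - r^2)*x + r^2*y := by
    have := mul_nonneg (mul_nonneg hr0 hr0) hy0
    nlinarith [mul_nonneg (by nlinarith : (0:ℝ) ≤ 1 - r^2) hx0]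
  have h1 : (1 - r^2)*x + r^2*y ≤ u := by
    nlinarith [sq_nonneg (u - ((1 - r^2)*x + r^2*y)), sq_nonneg (u + ((1 - r^2)*x + r^2*y)),
      mul_nonneg (mul_nonneg (mul_nonneg hr0 hr0) (by nlinarith : (0:ℝ) ≤ 1 - r^2)) (sq_nonneg (x - y))]
  rcases le_total y x with hyx | hxy
  · have hux : u ≤ x := by
      nlinarith [sq_nonneg (u - x), sq_nonneg (u + x),
        mul_nonneg (mul_nonneg hr0 hr0) (by nlinarith : (0:ℝ) ≤ x^2 - y^2)]
    have h2 : x - u ≤ r^2*(x - y) := by nlinarith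
    have h3 : r^2*(x - y) ≤ r*(x - y) := by
      nlinarith [mul_nonneg (mul_nonneg hr0 (by linarith : (0:ℝ) ≤ 1 - r)) (by linarith : (0:ℝ) ≤ x - y)]
    nlinarith
  · have hxu : x ≤ u := by
      nlinarith [sq_nonneg (u - x), sq_nonneg (u + x),
        mul_nonneg (mul_nonneg hr0 hr0) (by nlinarith : (0:ℝ) ≤ y^2 - x^2)]
    have hc : (0:ℝ) ≤ x + r*(y - x) := by
      nlinarith [mul_nonneg hr0 (by linarith : (0:ℝ) ≤ y - x)]
    have h1' : u ≤ x + r*(y - x) := by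
      nlinarith [sq_nonneg (u - (x + r*(y - x))), sq_nonneg (u + (x + r*(y - x))),
        mul_nonneg (mul_nonneg (mul_nonneg hr0 (by linarith : (0:ℝ) ≤ 1 - r)) hx0)
          (by linarith : (0:ℝ) ≤ y - x)]
    nlinarith [mul_nonneg hr0 (by linarith : (0:ℝ) ≤ y - x)]

lemma conv_pt {l a b : ℝ} (hl0 : 0 ≤ l) (hl1 : l ≤ 1) (ha : 0 ≤ a) (hb : 0 ≤ b) :
    (Real.sqrt a - Real.sqrt ((1-l)*a + l*b))^2 ≤ l * (Real.sqrt a - Real.sqrt b)^2 := by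
  have hm0 : 0 ≤ (1-l)*a + l*b := by nlinarith
  have hr2 : Real.sqrt l ^ 2 = l := Real.sq_sqrt hl0
  have hr1 : Real.sqrt l ≤ 1 := by
    nlinarith [Real.sqrt_nonneg l]
  have hu2 : Real.sqrt ((1-l)*a + l*b) ^ 2 = (1 - Real.sqrt l ^ 2)*(Real.sqrt a)^2 + (Real.sqrt l)^2*(Real.sqrt b)^2 := by
    rw [Real.sq_sqrt hm0, Real.sq_sqrt ha, Real.sq_sqrt hb, hr2]
  have := conv_pt_core (Real.sqrt_nonneg a) (Real.sqrt_nonneg b) (Real.sqrt_nonneg _)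
    (Real.sqrt_nonneg l) hr1 hu2
  calc (Real.sqrt a - Real.sqrt ((1-l)*a + l*b))^2
      ≤ (Real.sqrt l)^2 * (Real.sqrt a - Real.sqrt b)^2 := this
    _ = l * (Real.sqrt a - Real.sqrt b)^2 := by rw [hr2]

lemma sqHellinger_shrink {X : Type*} [MeasurableSpace X] (μ : Measure X)
    (p q : X → ℝ) (hp : Measurable p) (hq : Measurable q)
    (hp0 : ∀ x, 0 ≤ p x) (hq0 : ∀ x, 0 ≤ q x)
    (hpi : Integrable p μ) (hqi : Integrable q μ)
    (l : ℝ) (hl0 : 0 ≤ l) (hl1 : l ≤ 1) :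
    sqHellinger μ p (fun x => (1-l)*p x + l*q x) ≤ l * sqHellinger μ p q := by
  have hi := sq_diff_integrable μ p q hp hq hp0 hq0 hpi hqi
  have hmono : ∫ x, (Real.sqrt (p x) - Real.sqrt ((1-l)*p x + l*q x))^2 ∂μ ≤
      ∫ x, l * (Real.sqrt (p x) - Real.sqrt (q x))^2 ∂μ := by
    apply integral_mono_of_nonneg
    · filter_upwards with x; positivity
    · exact hi.const_mul l
    · filter_upwards with x
      exact conv_pt hl0 hl1 (hp0 x) (hq0 x)
  rw [integral_const_mul] at hmono
  unfold sqHellinger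
  linarith

/-- KL approximation from a ratio cover of a local Hellinger ball in a
convex class of densities. -/
theorem stmt_12 {X : Type*} [MeasurableSpace X] (μ : Measure X)
    (P : Set (X → ℝ)) (hPconv : Convex ℝ P)
    (hPpos : ∀ f ∈ P, ∀ x, 0 ≤ f x) (hPmeas : ∀ f ∈ P, Measurable f)
    (hP1 : ∀ f ∈ P, ∫ x, f x ∂μ = 1)
    (p : X → ℝ) (hp : p ∈ P) (ε : ℝ) (hε : 0 < ε) (α : ℝ) (hα : 2 ≤ α)
    (S : Finset (X → ℝ))
    (hSsub : ↑S ⊆ P ∩ {q | sqHellinger μ p q ≤ ε})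
    (hScover : ∀ q ∈ P ∩ {q | sqHellinger μ p q ≤ ε},
      ∃ qt ∈ S, ∀ x, q x ≤ α * qt x) :
    ∀ q ∈ P, ∃ qt ∈ S,
      klDiv' μ q qt ≤ 30 * (ε + sqHellinger μ p q) *
        Real.log (α * max 1 (sqHellinger μ p q / ε)) := by
  have hInt : ∀ f ∈ P, Integrable f μ := by
    intro f hf
    by_contra hc
    have h1 := hP1 f hf
    rw [integral_undef hc] at h1
    norm_num at h1
  intro q hq
  set h := sqHellinger μ p q with hh_def
  have hh0 : 0 ≤ h := sqHellinger_nonneg μ p q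
  set M := max 1 (h/ε) with hM_def
  have hM1 : 1 ≤ M := le_max_left _ _
  set B := α * M with hB_def
  have hB2 : (2:ℝ) ≤ B := by nlinarith
  have hlogB : (0:ℝ) ≤ Real.log B :=
    Real.log_nonneg (by linarith)
  -- common tail
  have tail : ∀ qt ∈ S, (∀ x, q x ≤ B * qt x) →
      klDiv' μ q qt ≤ 30 * (ε + h) * Real.log B := by
    intro qt hqtS hr
    obtain ⟨hqtP, hqtH⟩ := hSsub hqtS
    have hkb := kl_bound μ q qt (hPmeas q hq) (hPmeas qt hqtP)
      (hPpos q hq) (hPpos qt hqtP) (hInt q hq) (hInt qt hqtP)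
      (hP1 q hq) (hP1 qt hqtP) B hB2 hr
    have htri : sqHellinger μ q qt ≤ 2*h + 2*ε := by
      have t := sqHellinger_triangle μ q p qt (hPmeas q hq) (hPmeas p hp) (hPmeas qt hqtP)
        (hPpos q hq) (hPpos p hp) (hPpos qt hqtP) (hInt q hq) (hInt p hp) (hInt qt hqtP)
      rw [sqHellinger_symm μ q p] at t
      have : sqHellinger μ p qt ≤ ε := hqtH
      linarith
    calc klDiv' μ q qt ≤ 15 * Real.log B * sqHellinger μ q qt := hkb
      _ ≤ 15 * Real.log B * (2*h + 2*ε) := by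
          apply mul_le_mul_of_nonneg_left htri (by linarith)
      _ = 30 * (ε + h) * Real.log B := by ring
  by_cases hc : h ≤ ε
  · obtain ⟨qt, hqtS, hcov⟩ := hScover q ⟨hq, hc⟩
    refine ⟨qt, hqtS, ?_⟩
    apply tail qt hqtS
    intro x
    have h1 := hcov x
    have h2 := hPpos qt (hSsub hqtS).1 x
    rw [hB_def]
    nlinarith [mul_nonneg (by linarith : (0:ℝ) ≤ M - 1) (mul_nonneg (by linarith : (0:ℝ) ≤ α) h2)]
  · push_neg at hc
    have hhpos : 0 < h := lt_trans hε hc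
    set l := ε / h with hl_def
    have hl0 : 0 < l := div_pos hε hhpos
    have hl1 : l ≤ 1 := by
      rw [hl_def, div_le_one hhpos]; linarith
    set m := fun x => (1-l)*p x + l*q x with hm_def
    have hmP : m ∈ P := by
      have hmem := hPconv hp hq (by linarith : (0:ℝ) ≤ 1-l) (le_of_lt hl0) (by ring)
      have he : (1-l) • p + l • q = m := by
        funext x; simp [hm_def, Pi.add_apply, Pi.smul_apply, smul_eq_mul]
      rwa [he] at hmem
    have hmH : sqHellinger μ p m ≤ ε := by
      have hs := sqHellinger_shrink μ p q (hPmeas p hp) (hPmeas q hq)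
        (hPpos p hp) (hPpos q hq) (hInt p hp) (hInt q hq) l (le_of_lt hl0) hl1
      have : l * h = ε := by
        rw [hl_def]; field_simp
      rw [← hm_def] at hs
      linarith [hs, this.le]
    obtain ⟨qt, hqtS, hcov⟩ := hScover m ⟨hmP, hmH⟩
    refine ⟨qt, hqtS, ?_⟩
    apply tail qt hqtS
    intro x
    have h1 := hcov x
    have h2 : l * q x ≤ m x := by
      have := hPpos p hp x
      simp only [hm_def]
      nlinarith
    have hM : M = h/ε := by
      rw [hM_def, max_eq_right]
      rw [le_div_iff₀ hε]; linarith
    have h3 : l * q x ≤ α * qt x := le_trans h2 h1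
    have h4 := mul_le_mul_of_nonneg_left h3 (le_of_lt (by positivity : (0:ℝ) < h/ε))
    calc q x = (h/ε) * (l * q x) := by rw [hl_def]; field_simp
      _ ≤ (h/ε) * (α * qt x) := h4
      _ = B * qt x := by rw [hB_def, hM]; ring
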